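/- arXiv:2506.23720 — 4 statements merged into one kernel-verified Lean document; each statement's English description precedes it below -/
import Mathlib

section
/- Let Ω ⊆ ℝ^d be an open set and μ a positive Radon measure on ℝ^d such that (Ω, μ) is a spectral pair, with ℱ : L²(Ω) → L²(μ) the isometric isomorphism extending f ↦ f̂. For t ∈ ℝ^d, let Û(t) be the unitary operator on L²(μ) given by (Û(t)g)(λ) = e^{2πi λ·t} g(λ), and define U(t) := ℱ^{−1} ∘ Û(t) ∘ ℱ on L²(Ω). Then (U(t))_{t∈ℝ^d} is a strongly continuous unitary group and a group of local translations on Ω. -/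
/-!
`U(t)` is the conjugate, by the unitary `ℱ`, of multiplication by the unimodular character
`λ ↦ e^{2πiλ·t}`; linearity, unitarity and the group law pass through the conjugation. For strong
continuity, `t ↦ ⟪U s f, U t f⟫` is continuous by dominated convergence on the Fourier side, and
weak continuity together with `‖U t f‖ = ‖f‖` gives norm continuity.

For the local translation property, let `A ⊆ V` have finite measure. Both `𝟙_A` and `𝟙_{A+t}` lie
in `L¹(Ω) ∩ L²(Ω)`, so their transforms are explicit, and `e^{-2πiλ·t} 𝟙̂_A = 𝟙̂_{A+t}`. Hence
`∫_A U(t)f = ⟪𝟙̂_A, e^{2πiλ·t} f̂⟫ = ⟪𝟙̂_{A+t}, f̂⟫ = ∫_{A+t} f = ∫_A f(· + t)`, and equality of all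
these set integrals gives `U(t)f = f(· + t)` a.e. on `V`.
-/

open MeasureTheory

noncomputable def negExp (d : ℕ) (lam x : Fin d → ℝ) : ℂ :=
  Complex.exp ((((-2) * Real.pi * (∑ i, lam i * x i) : ℝ) : ℂ) * Complex.I)

def IsSpectralPair (d : ℕ) (Ω : Set (Fin d → ℝ)) (μ : Measure (Fin d → ℝ)) : Prop :=
  (∀ f : (Fin d → ℝ) → ℂ, Integrable f (volume.restrict Ω) →
      MemLp f 2 (volume.restrict Ω) →
      MemLp (fun lam => ∫ x in Ω, f x * negExp d lam x) 2 μ ∧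
      eLpNorm (fun lam => ∫ x in Ω, f x * negExp d lam x) 2 μ
        = eLpNorm f 2 (volume.restrict Ω)) ∧
  Dense {g : Lp ℂ 2 μ | ∃ f : (Fin d → ℝ) → ℂ,
      Integrable f (volume.restrict Ω) ∧ MemLp f 2 (volume.restrict Ω) ∧
      (g : (Fin d → ℝ) → ℂ) =ᵐ[μ] fun lam => ∫ x in Ω, f x * negExp d lam x}

open scoped Real ComplexConjugate InnerProductSpace FourierTransform

theorem continuous_of_norm_eq_of_continuous_inner {X E : Type*} [TopologicalSpace X]
    [NormedAddCommGroup E] [InnerProductSpace ℂ E] {u : X → E} {c : ℝ} (hu : ∀ t, ‖u t‖ = c)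
    (hinner : ∀ s, Continuous fun t => ⟪u s, u t⟫_ℂ) : Continuous u := by
  refine continuous_iff_continuousAt.2 fun s => tendsto_iff_norm_sub_tendsto_zero.2 ?_
  have hdist : ∀ t, ‖u t - u s‖ = √(2 * c ^ 2 - 2 * RCLike.re ⟪u s, u t⟫_ℂ) := fun t => by
    rw [← Real.sqrt_sq (norm_nonneg _), norm_sub_rev, norm_sub_sq (𝕜 := ℂ), hu, hu]
    ring_nf
  have hzero : √(2 * c ^ 2 - 2 * RCLike.re ⟪u s, u s⟫_ℂ) = 0 := by
    rw [inner_self_eq_norm_sq, hu]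
    simp
  simp_rw [hdist]
  rw [← hzero]
  exact ((continuous_const.sub (continuous_const.mul
    (RCLike.continuous_re.comp (hinner s)))).sqrt).tendsto s

theorem setIntegral_image_add_right {G E : Type*} [MeasurableSpace G] [AddGroup G]
    [MeasurableAdd G] [NormedAddCommGroup E] [NormedSpace ℝ E] (μ : Measure G)
    [μ.IsAddRightInvariant] (g : G → E) (t : G) (A : Set G) :
    ∫ y in (· + t) '' A, g y ∂μ = ∫ x in A, g (x + t) ∂μ :=
  (measurePreserving_add_right μ t).setIntegral_image_emb (measurableEmbedding_addRight t) g A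

theorem measure_image_add_right {G : Type*} [MeasurableSpace G] [AddGroup G] [MeasurableAdd G]
    (μ : Measure G) [μ.IsAddRightInvariant] (t : G) (A : Set G) :
    μ ((· + t) '' A) = μ A := by
  rw [Set.image_add_right, measure_preimage_add_right]

theorem integrableOn_Lp_of_subset {α E : Type*} [MeasurableSpace α] [NormedAddCommGroup E]
    {p : ENNReal} {ν : Measure α} {Ω A : Set α} (g : Lp E p (ν.restrict Ω)) (hp : 1 ≤ p)
    (hAΩ : A ⊆ Ω) (hA : ν A ≠ ⊤) : IntegrableOn g A ν := by
  have := integrableOn_Lp_of_measure_ne_top g hp (ne_top_of_le_ne_top hA (ν.restrict_apply_le Ω A))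
  rwa [IntegrableOn, Measure.restrict_restrict_of_subset hAΩ] at this

section Multiplier

variable {α β : Type*} [MeasurableSpace α] [MeasurableSpace β] {ν : Measure α} {μ : Measure β}

/-- `T = F⁻¹ ∘ (m * ·) ∘ F`. -/
def IsMulConj (F : Lp ℂ 2 ν ≃ₗᵢ[ℂ] Lp ℂ 2 μ) (m : β → ℂ) (T : Lp ℂ 2 ν → Lp ℂ 2 ν) : Prop :=
  ∀ f, (F (T f) : β → ℂ) =ᵐ[μ] fun lam => m lam * F f lam

variable {F : Lp ℂ 2 ν ≃ₗᵢ[ℂ] Lp ℂ 2 μ}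

theorem IsMulConj.isLinearMap {m : β → ℂ} {T : Lp ℂ 2 ν → Lp ℂ 2 ν} (hT : IsMulConj F m T) :
    IsLinearMap ℂ T where
  map_add f g := F.injective <| Lp.ext <| by
    have hFadd : ⇑(F (f + g)) =ᵐ[μ] ⇑(F f) + ⇑(F g) := by rw [map_add]; exact Lp.coeFn_add _ _
    rw [map_add]
    filter_upwards [hT (f + g), hT f, hT g, hFadd, Lp.coeFn_add (F (T f)) (F (T g))]
      with lam hfg hf hg hFadd hTadd
    simp only [hfg, hFadd, hTadd, Pi.add_apply, hf, hg, mul_add]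
  map_smul c f := F.injective <| Lp.ext <| by
    have hFsmul : ⇑(F (c • f)) =ᵐ[μ] c • ⇑(F f) := by rw [map_smul]; exact Lp.coeFn_smul _ _
    rw [map_smul]
    filter_upwards [hT (c • f), hT f, hFsmul, Lp.coeFn_smul c (F (T f))]
      with lam hcf hf hFsmul hTsmul
    simp only [hcf, hFsmul, hTsmul, Pi.smul_apply, hf, smul_eq_mul, mul_left_comm]

theorem IsMulConj.norm_map {m : β → ℂ} {T : Lp ℂ 2 ν → Lp ℂ 2 ν} (hT : IsMulConj F m T)
    (hm : ∀ lam, ‖m lam‖ = 1) (f : Lp ℂ 2 ν) : ‖T f‖ = ‖f‖ := by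
  rw [← F.norm_map (T f), ← F.norm_map f, Lp.norm_def, Lp.norm_def, eLpNorm_congr_ae (hT f)]
  congr 1
  exact eLpNorm_congr_norm_ae <| .of_forall fun lam => by simp [hm]

theorem IsMulConj.unique {m : β → ℂ} {T T' : Lp ℂ 2 ν → Lp ℂ 2 ν} (hT : IsMulConj F m T)
    (hT' : IsMulConj F m T') : T = T' :=
  funext fun f => F.injective <| Lp.ext <| (hT f).trans (hT' f).symm

theorem IsMulConj.eq_id {m : β → ℂ} {T : Lp ℂ 2 ν → Lp ℂ 2 ν} (hT : IsMulConj F m T)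
    (hm : ∀ lam, m lam = 1) : T = id :=
  hT.unique fun f => .of_forall fun lam => by simp [hm]

theorem IsMulConj.comp {m m' : β → ℂ} {S T : Lp ℂ 2 ν → Lp ℂ 2 ν} (hS : IsMulConj F m S)
    (hT : IsMulConj F m' T) : IsMulConj F (fun lam => m lam * m' lam) (S ∘ T) := fun f => by
  filter_upwards [hS (T f), hT f] with lam hSTf hTf
  simp only [Function.comp_apply, hSTf, hTf, mul_assoc]

theorem IsMulConj.inner_map_map {m m' : β → ℂ} {S T : Lp ℂ 2 ν → Lp ℂ 2 ν}
    (hS : IsMulConj F m S) (hT : IsMulConj F m' T) (f g : Lp ℂ 2 ν) :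
    ⟪S f, T g⟫_ℂ = ∫ lam, ⟪m lam * F f lam, m' lam * F g lam⟫_ℂ ∂μ := by
  rw [← F.inner_map_map, L2.inner_def]
  refine integral_congr_ae ?_
  filter_upwards [hS f, hT g] with lam hSf hTg
  rw [hSf, hTg]

theorem continuous_of_isMulConj {G : Type*} [TopologicalSpace G] [FirstCountableTopology G]
    {m : G → β → ℂ} {U : G → Lp ℂ 2 ν → Lp ℂ 2 ν} (hU : ∀ t, IsMulConj F (m t) (U t))
    (hm : ∀ t lam, ‖m t lam‖ = 1) (hcont : ∀ lam, Continuous fun t => m t lam)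
    (f : Lp ℂ 2 ν) : Continuous fun t => U t f := by
  refine continuous_of_norm_eq_of_continuous_inner (fun t => (hU t).norm_map (hm t) f) fun s => ?_
  simp_rw [(hU s).inner_map_map (hU _)]
  refine continuous_of_dominated (bound := fun lam => ‖F f lam‖ ^ 2) (fun t => ?_) (fun t => ?_)
    ?_ (.of_forall fun lam => continuous_const.inner ((hcont lam).mul continuous_const))
  · refine ((Lp.aestronglyMeasurable (F (U s f))).inner
      (Lp.aestronglyMeasurable (F (U t f)))).congr ?_
    filter_upwards [hU s f, hU t f] with lam hs ht
    rw [hs, ht]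
  · refine .of_forall fun lam => (norm_inner_le_norm _ _).trans_eq ?_
    simp [hm, sq]
  · exact (Lp.memLp (F f)).integrable_norm_pow two_ne_zero

end Multiplier

section LocalTranslation

variable {d : ℕ}

theorem negExp_add (lam x t : Fin d → ℝ) :
    negExp d lam (x + t) = conj (𝐞 (lam ⬝ᵥ t) : ℂ) * negExp d lam x := by
  rw [negExp, negExp, Real.fourierChar_apply, ← Complex.exp_conj, ← Complex.exp_add]
  congr 1
  simp only [dotProduct, Pi.add_apply, mul_add, Finset.sum_add_distrib, map_mul, Complex.conj_I,
    Complex.conj_ofReal]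
  push_cast
  ring

theorem fourierChar_dotProduct_add (lam s t : Fin d → ℝ) :
    (𝐞 (lam ⬝ᵥ (s + t)) : ℂ) = 𝐞 (lam ⬝ᵥ s) * 𝐞 (lam ⬝ᵥ t) := by
  rw [dotProduct_add, AddChar.map_add_eq_mul, Circle.coe_mul]

variable {Ω : Set (Fin d → ℝ)} {μ : Measure (Fin d → ℝ)}

def ExtendsFourier (F : Lp ℂ 2 (volume.restrict Ω) ≃ₗᵢ[ℂ] Lp ℂ 2 μ) : Prop :=
  ∀ f : Lp ℂ 2 (volume.restrict Ω), Integrable (f : (Fin d → ℝ) → ℂ) (volume.restrict Ω) →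
    (F f : (Fin d → ℝ) → ℂ) =ᵐ[μ] fun lam => ∫ x in Ω, f x * negExp d lam x

variable {F : Lp ℂ 2 (volume.restrict Ω) ≃ₗᵢ[ℂ] Lp ℂ 2 μ}

theorem coeFn_map_indicatorConstLp_one (hF : ExtendsFourier F)
    {A : Set (Fin d → ℝ)} (hA : MeasurableSet A) (hAΩ : A ⊆ Ω) (hνA : volume.restrict Ω A ≠ ⊤) :
    (F (indicatorConstLp 2 hA hνA (1 : ℂ)) : (Fin d → ℝ) → ℂ) =ᵐ[μ]
      fun lam => ∫ x in A, negExp d lam x := by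
  refine (hF _ (integrable_indicatorConstLp hA hνA 1)).trans (.of_forall fun lam => ?_)
  calc ∫ x in Ω, indicatorConstLp 2 hA hνA (1 : ℂ) x * negExp d lam x
      = ∫ x in Ω, A.indicator (negExp d lam) x := by
        refine integral_congr_ae ?_
        filter_upwards [indicatorConstLp_coeFn (p := 2) (hs := hA) (hμs := hνA) (c := (1 : ℂ))]
          with x hx
        by_cases hxA : x ∈ A <;> simp [hx, hxA]
    _ = ∫ x in A, negExp d lam x := by
        rw [integral_indicator hA, Measure.restrict_restrict_of_subset hAΩ]

theorem setIntegral_eq_setIntegral_add_right_of_isMulConj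
    (hF : ExtendsFourier F)
    {t : Fin d → ℝ} {T : Lp ℂ 2 (volume.restrict Ω) → Lp ℂ 2 (volume.restrict Ω)}
    (hT : IsMulConj F (fun lam => 𝐞 (lam ⬝ᵥ t)) T) (f : Lp ℂ 2 (volume.restrict Ω))
    {A : Set (Fin d → ℝ)} (hA : MeasurableSet A) (hAΩ : A ⊆ Ω) (hAt : (· + t) '' A ⊆ Ω)
    (hAfin : volume A ≠ ⊤) :
    ∫ x in A, T f x = ∫ x in A, f (x + t) := by
  have hB : MeasurableSet ((· + t) '' A) := (measurableEmbedding_addRight t).measurableSet_image' hA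
  have hνA : volume.restrict Ω A ≠ ⊤ := ne_top_of_le_ne_top hAfin (Measure.restrict_apply_le _ _)
  have hνB : volume.restrict Ω ((· + t) '' A) ≠ ⊤ :=
    ne_top_of_le_ne_top (by rwa [measure_image_add_right]) (Measure.restrict_apply_le _ _)
  have hFA := coeFn_map_indicatorConstLp_one hF hA hAΩ hνA
  have hFB : (F (indicatorConstLp 2 hB hνB (1 : ℂ)) : (Fin d → ℝ) → ℂ) =ᵐ[μ]
      fun lam => conj (𝐞 (lam ⬝ᵥ t) : ℂ) * ∫ x in A, negExp d lam x := by
    refine (coeFn_map_indicatorConstLp_one hF hB hAt hνB).trans (.of_forall fun lam => ?_)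
    simp only [setIntegral_image_add_right, negExp_add, integral_const_mul]
  calc ∫ x in A, T f x
      = ⟪indicatorConstLp 2 hA hνA (1 : ℂ), T f⟫_ℂ := by
        rw [L2.inner_indicatorConstLp_one, Measure.restrict_restrict_of_subset hAΩ]
    _ = ⟪F (indicatorConstLp 2 hA hνA (1 : ℂ)), F (T f)⟫_ℂ := (F.inner_map_map _ _).symm
    _ = ⟪F (indicatorConstLp 2 hB hνB (1 : ℂ)), F f⟫_ℂ := by
        rw [L2.inner_def, L2.inner_def]
        refine integral_congr_ae ?_
        filter_upwards [hFA, hFB, hT f] with lam hFA hFB hTf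
        simp only [RCLike.inner_apply, hFA, hFB, hTf, map_mul, Complex.conj_conj]
        ring
    _ = ⟪indicatorConstLp 2 hB hνB (1 : ℂ), f⟫_ℂ := F.inner_map_map _ _
    _ = ∫ x in A, f (x + t) := by
        rw [L2.inner_indicatorConstLp_one, Measure.restrict_restrict_of_subset hAt,
          setIntegral_image_add_right]

theorem ae_eq_add_right_of_isMulConj
    (hF : ExtendsFourier F)
    {t : Fin d → ℝ} {T : Lp ℂ 2 (volume.restrict Ω) → Lp ℂ 2 (volume.restrict Ω)}
    (hT : IsMulConj F (fun lam => 𝐞 (lam ⬝ᵥ t)) T) (f : Lp ℂ 2 (volume.restrict Ω))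
    {V : Set (Fin d → ℝ)} (hV : MeasurableSet V) (hVΩ : V ⊆ Ω) (hVt : (· + t) '' V ⊆ Ω) :
    ∀ᵐ x ∂volume.restrict V, T f x = f (x + t) := by
  refine ae_eq_of_forall_setIntegral_eq_of_sigmaFinite (fun s hs hsV => ?_) (fun s hs hsV => ?_)
    fun s hs hsV => ?_ <;>
    rw [Measure.restrict_apply hs, lt_top_iff_ne_top] at hsV <;>
    simp only [IntegrableOn, Measure.restrict_restrict hs]
  · exact integrableOn_Lp_of_subset (T f) one_le_two (Set.inter_subset_right.trans hVΩ) hsV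
  · refine ((measurePreserving_add_right volume t).integrableOn_image
      (measurableEmbedding_addRight t)).1 ?_
    exact integrableOn_Lp_of_subset f one_le_two
      ((Set.image_mono Set.inter_subset_right).trans hVt) (by rwa [measure_image_add_right])
  · exact setIntegral_eq_setIntegral_add_right_of_isMulConj hF hT f (hs.inter hV)
      (Set.inter_subset_right.trans hVΩ) ((Set.image_mono Set.inter_subset_right).trans hVt) hsV

end LocalTranslation

theorem statement2_general (d : ℕ) (Ω : Set (Fin d → ℝ))
    (μ : Measure (Fin d → ℝ))
    (F : Lp ℂ 2 (volume.restrict Ω) ≃ₗᵢ[ℂ] Lp ℂ 2 μ)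
    (hF : ∀ f : Lp ℂ 2 (volume.restrict Ω),
      Integrable (f : (Fin d → ℝ) → ℂ) (volume.restrict Ω) →
      (F f : (Fin d → ℝ) → ℂ) =ᵐ[μ] fun lam => ∫ x in Ω, f x * negExp d lam x)
    (U : (Fin d → ℝ) → Lp ℂ 2 (volume.restrict Ω) → Lp ℂ 2 (volume.restrict Ω))
    (hU : ∀ t f, (F (U t f) : (Fin d → ℝ) → ℂ) =ᵐ[μ]
      fun lam => Complex.exp (((2 * Real.pi * (∑ i, lam i * t i) : ℝ) : ℂ) * Complex.I)
        * (F f : (Fin d → ℝ) → ℂ) lam) :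
    (∀ t, IsLinearMap ℂ (U t)) ∧
    (∀ t f, ‖U t f‖ = ‖f‖) ∧
    (∀ t, Function.Bijective (U t)) ∧
    (U 0 = id) ∧
    (∀ s t f, U (s + t) f = U s (U t f)) ∧
    (∀ f, Continuous fun t => U t f) ∧
    (∀ V : Set (Fin d → ℝ), IsOpen V → V ⊆ Ω →
      ∀ t : Fin d → ℝ, (fun x => x + t) '' V ⊆ Ω →
      ∀ f : Lp ℂ 2 (volume.restrict Ω), ∀ᵐ x ∂(volume.restrict V),
        (U t f : (Fin d → ℝ) → ℂ) x = (f : (Fin d → ℝ) → ℂ) (x + t)) := by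
  -- `𝐞 (lam ⬝ᵥ t)` unfolds definitionally to the exponential in `hU`.
  have hU' : ∀ t, IsMulConj F (fun lam => 𝐞 (lam ⬝ᵥ t)) (U t) := hU
  have hzero : U 0 = id := (hU' 0).eq_id fun lam => by simp
  have hadd : ∀ s t, U (s + t) = U s ∘ U t := fun s t =>
    (hU' (s + t)).unique <| by simpa only [← fourierChar_dotProduct_add] using (hU' s).comp (hU' t)
  refine ⟨fun t => (hU' t).isLinearMap, fun t => (hU' t).norm_map fun _ => Circle.norm_coe _,
    fun t => Function.bijective_iff_has_inverse.2 ⟨U (-t), fun f => ?_, fun f => ?_⟩, hzero,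
    fun s t f => congrFun (hadd s t) f, ?_, ?_⟩
  · simpa [hzero] using (congrFun (hadd (-t) t) f).symm
  · simpa [hzero] using (congrFun (hadd t (-t)) f).symm
  · exact continuous_of_isMulConj hU' (fun _ _ => Circle.norm_coe _) fun lam =>
      continuous_subtype_val.comp <| Real.continuous_fourierChar.comp <|
        continuous_const.dotProduct continuous_id
  · intro V hV hVΩ t hVt f
    exact ae_eq_add_right_of_isMulConj hF (hU' t) f hV.measurableSet hVΩ hVt

/-- If `(Ω, μ)` is a spectral pair with associated isometric isomorphism
`F : L²(Ω) → L²(μ)` extending the Fourier transform, and `U(t) = F⁻¹ ∘ Û(t) ∘ F` where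
`Û(t)` is the multiplication by `e^{2πiλ·t}` on `L²(μ)`, then `(U(t))` is a strongly
continuous unitary group and a group of local translations on `Ω`. -/
theorem statement2 (d : ℕ) (Ω : Set (Fin d → ℝ)) (hΩ : IsOpen Ω)
    (μ : Measure (Fin d → ℝ)) [μ.Regular]
    (hpair : IsSpectralPair d Ω μ)
    (F : Lp ℂ 2 (volume.restrict Ω) ≃ₗᵢ[ℂ] Lp ℂ 2 μ)
    (hF : ∀ f : Lp ℂ 2 (volume.restrict Ω),
      Integrable (f : (Fin d → ℝ) → ℂ) (volume.restrict Ω) →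
      (F f : (Fin d → ℝ) → ℂ) =ᵐ[μ] fun lam => ∫ x in Ω, f x * negExp d lam x)
    (U : (Fin d → ℝ) → Lp ℂ 2 (volume.restrict Ω) → Lp ℂ 2 (volume.restrict Ω))
    (hU : ∀ t f, (F (U t f) : (Fin d → ℝ) → ℂ) =ᵐ[μ]
      fun lam => Complex.exp (((2 * Real.pi * (∑ i, lam i * t i) : ℝ) : ℂ) * Complex.I)
        * (F f : (Fin d → ℝ) → ℂ) lam) :
    (∀ t, IsLinearMap ℂ (U t)) ∧
    (∀ t f, ‖U t f‖ = ‖f‖) ∧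
    (∀ t, Function.Bijective (U t)) ∧
    (U 0 = id) ∧
    (∀ s t f, U (s + t) f = U s (U t f)) ∧
    (∀ f, Continuous fun t => U t f) ∧
    (∀ V : Set (Fin d → ℝ), IsOpen V → V ⊆ Ω →
      ∀ t : Fin d → ℝ, (fun x => x + t) '' V ⊆ Ω →
      ∀ f : Lp ℂ 2 (volume.restrict Ω), ∀ᵐ x ∂(volume.restrict V),
        (U t f : (Fin d → ℝ) → ℂ) x = (f : (Fin d → ℝ) → ℂ) (x + t)) :=
  statement2_general d Ω μ F hF U hU
end

section
/- Let Ω = ∪_{i∈I}(α_i, β_i) ⊆ ℝ be a finite or countable union of pairwise disjoint open intervals (α_i ∈ [−∞,∞), β_i ∈ (−∞,∞]) with l := inf_{i∈I}(β_i − α_i) > 0, and let (U(t))_{t∈ℝ} be a strongly continuous unitary group on L²(Ω) with the integrability property. Let 0 < ε < l, let i ∈ I with α_i > −∞, and let f ∈ L²(Ω) vanish almost everywhere outside [α_i, α_i + ε]. Then U(ε)f vanishes almost everywhere outside ∪_{k∈I, β_k<∞} [β_k − ε, β_k]. -/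
open MeasureTheory

/-- Let `Ω = ⋃_{i∈I} (α_i, β_i) ⊆ ℝ` be a countable union of pairwise disjoint
open intervals with `inf_i (β_i - α_i) > 0`, and let `(U(t))` be a strongly continuous
unitary group on `L²(Ω)` with the integrability property. If `0 < ε < inf_i (β_i - α_i)`,
`α_i > -∞`, and `f ∈ L²(Ω)` vanishes a.e. outside `[α_i, α_i + ε]`, then `U(ε) f`
vanishes a.e. outside `⋃_{k, β_k < ∞} [β_k - ε, β_k]`. -/
theorem statement4 (I : Type) [Countable I] (α β : I → EReal)
    (hαtop : ∀ i, α i ≠ ⊤) (hβbot : ∀ i, β i ≠ ⊥)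
    (hdisj : Pairwise fun i j => Disjoint
      {x : ℝ | α i < (x : EReal) ∧ (x : EReal) < β i}
      {x : ℝ | α j < (x : EReal) ∧ (x : EReal) < β j})
    (Ω : Set ℝ) (hΩ : Ω = ⋃ i, {x : ℝ | α i < (x : EReal) ∧ (x : EReal) < β i})
    (hl : 0 < ⨅ i, (β i - α i))
    (U : ℝ → (Lp ℂ 2 (volume.restrict Ω) ≃ₗᵢ[ℂ] Lp ℂ 2 (volume.restrict Ω)))
    (hU0 : U 0 = LinearIsometryEquiv.refl ℂ (Lp ℂ 2 (volume.restrict Ω)))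
    (hUadd : ∀ s t f, U (s + t) f = U s (U t f))
    (hUcont : ∀ f, Continuous fun t => U t f)
    (hInt : ∀ V : Set ℝ, IsOpen V → V ⊆ Ω → ∀ δ : ℝ, 0 < δ →
      (∀ s : ℝ, |s| < δ → (fun x => x + s) '' V ⊆ Ω) →
      ∀ s : ℝ, |s| < δ → ∀ f, ∀ᵐ x ∂(volume.restrict V),
        (U s f : ℝ → ℂ) x = (f : ℝ → ℂ) (x + s))
    (ε : ℝ) (hε : 0 < ε) (hεl : (ε : EReal) < ⨅ i, (β i - α i))
    (i : I) (hi : α i ≠ ⊥)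
    (f : Lp ℂ 2 (volume.restrict Ω))
    (hf : ∀ᵐ x ∂(volume.restrict Ω),
      x ∉ Set.Icc ((α i).toReal) ((α i).toReal + ε) → (f : ℝ → ℂ) x = 0) :
    ∀ᵐ x ∂(volume.restrict Ω),
      x ∉ ⋃ k ∈ {k : I | β k ≠ ⊤}, Set.Icc ((β k).toReal - ε) ((β k).toReal) →
      (U ε f : ℝ → ℂ) x = 0 := by
  classical
  -- openness of Ω
  have hcoe : Continuous (fun x : ℝ => (x : EReal)) := continuous_coe_real_ereal
  have hSopen : ∀ k : I, IsOpen {x : ℝ | α k < (x : EReal) ∧ (x : EReal) < β k} := fun k => by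
    have heq : {x : ℝ | α k < (x : EReal) ∧ (x : EReal) < β k}
        = (fun x : ℝ => (x : EReal)) ⁻¹' Set.Ioo (α k) (β k) := rfl
    rw [heq]
    exact isOpen_Ioo.preimage hcoe
  have hΩopen : IsOpen Ω := by rw [hΩ]; exact isOpen_iUnion hSopen
  have hΩmeas : MeasurableSet Ω := hΩopen.measurableSet
  have hεk : ∀ k, (ε : EReal) < β k - α k := fun k => lt_of_lt_of_le hεl (iInf_le _ k)
  -- translation of a.e. statements
  have hshift : ∀ (u : ℝ) (Q : ℝ → Prop), (∀ᵐ z ∂(volume : Measure ℝ), Q z) →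
      ∀ᵐ y ∂(volume : Measure ℝ), Q (y + u) := by
    intro u Q hQ
    rw [ae_iff] at hQ ⊢
    have h1 : {y : ℝ | ¬ Q (y + u)} = (fun y : ℝ => y + u) ⁻¹' {z | ¬ Q z} := rfl
    rw [h1, measure_preimage_add_right]
    exact hQ
  -- key chaining lemma
  have key : ∀ (x r r₂ : ℝ), 0 < r → r < r₂ →
      Set.Ioo (x - r₂) (x + ε + r₂) ⊆ Ω →
      ∀ n : ℕ, ∀ s : ℝ, 0 ≤ s → s ≤ ε → s ≤ n * ((r₂ - r) / 2) →
      ∀ h : Lp ℂ 2 (volume.restrict Ω),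
        ∀ᵐ y ∂(volume : Measure ℝ), y ∈ Set.Ioo (x - r) (x + (ε - s) + r) →
          (U s h : ℝ → ℂ) y = (h : ℝ → ℂ) (y + s) := by
    intro x r r₂ hr hrr₂ hsub n
    induction n with
    | zero =>
      intro s hs0 hsε hsn h
      have hs : s = 0 := le_antisymm (by simpa using hsn) hs0
      subst hs
      filter_upwards with y hy
      rw [hU0]
      simp
    | succ n ih =>
      intro s hs0 hsε hsn h
      have hδpos : 0 < (r₂ - r) / 2 := by linarith
      by_cases hcase : s ≤ n * ((r₂ - r) / 2)
      · exact ih s hs0 hsε hcase h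
      · push_neg at hcase
        set s' : ℝ := n * ((r₂ - r) / 2) with hs'def
        have hs'0 : 0 ≤ s' := by positivity
        have hs'ε : s' ≤ ε := le_trans hcase.le hsε
        have hu0 : 0 < s - s' := by linarith
        have huδ : s - s' ≤ (r₂ - r) / 2 := by
          have hsn' : s ≤ ((n : ℝ) + 1) * ((r₂ - r) / 2) := by push_cast at hsn; linarith
          nlinarith
        have hUs : U s h = U (s - s') (U s' h) := by
          rw [← hUadd]
          congr 1
          ring
        have hVsub : Set.Ioo (x - r) (x + (ε - s) + r) ⊆ Ω := fun w hw =>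
          hsub ⟨by linarith [hw.1], by linarith [hw.2]⟩
        have htrans : ∀ t : ℝ, |t| < r₂ - r →
            (fun z => z + t) '' Set.Ioo (x - r) (x + (ε - s) + r) ⊆ Ω := by
          intro t ht
          rintro w ⟨v, hv, rfl⟩
          rw [abs_lt] at ht
          refine hsub ⟨?_, ?_⟩
          · show x - r₂ < v + t
            linarith [hv.1, ht.1]
          · show v + t < x + ε + r₂
            linarith [hv.2, ht.2]
        have hA := hInt (Set.Ioo (x - r) (x + (ε - s) + r)) isOpen_Ioo hVsub (r₂ - r)
          (by linarith) htrans (s - s') (by rw [abs_of_pos hu0]; linarith) (U s' h)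
        rw [ae_restrict_iff' measurableSet_Ioo] at hA
        have hB := hshift (s - s') _ (ih s' hs'0 hs'ε le_rfl h)
        filter_upwards [hA, hB] with y h1 h2 hy
        have hy' : y + (s - s') ∈ Set.Ioo (x - r) (x + (ε - s') + r) :=
          ⟨by linarith [hy.1], by linarith [hy.2]⟩
        calc (U s h : ℝ → ℂ) y = (U (s - s') (U s' h) : ℝ → ℂ) y := by rw [hUs]
          _ = (U s' h : ℝ → ℂ) (y + (s - s')) := h1 hy
          _ = (h : ℝ → ℂ) (y + (s - s') + s') := h2 hy'
          _ = (h : ℝ → ℂ) (y + s) := by ring_nf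
  -- reduce to a local statement
  rw [ae_restrict_iff' hΩmeas, ae_iff]
  apply measure_null_of_locally_null
  intro x hx
  simp only [Set.mem_setOf_eq] at hx
  push_neg at hx
  obtain ⟨hxΩ, hxU, -⟩ := hx
  have hxΩ' := hxΩ
  rw [hΩ] at hxΩ'
  obtain ⟨k, hk⟩ := Set.mem_iUnion.mp hxΩ'
  -- lower margin
  obtain ⟨a, hax, hak, haR⟩ : ∃ a : ℝ, a < x ∧ (∀ w : ℝ, a < w → α k < (w : EReal)) ∧
      (α k ≠ ⊥ → (α k).toReal ≤ a) := by
    rcases eq_or_ne (α k) ⊥ with hbot | hbot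
    · exact ⟨x - 1, by linarith, fun w _ => by rw [hbot]; exact bot_lt_iff_ne_bot.mpr (by simp),
        fun h => absurd hbot h⟩
    · refine ⟨(α k).toReal, ?_, fun w hw => ?_, fun _ => le_rfl⟩
      · have h1 := hk.1
        rwa [← EReal.coe_toReal (hαtop k) hbot, EReal.coe_lt_coe_iff] at h1
      · calc α k = ((α k).toReal : EReal) := (EReal.coe_toReal (hαtop k) hbot).symm
          _ < (w : EReal) := EReal.coe_lt_coe_iff.mpr hw
  -- upper margin
  obtain ⟨b, hbx, hbk⟩ : ∃ b : ℝ, x + ε < b ∧ ∀ w : ℝ, w < b → (w : EReal) < β k := by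
    rcases eq_or_ne (β k) ⊤ with htop | htop
    · exact ⟨x + ε + 1, by linarith, fun w _ => by rw [htop]; exact EReal.coe_lt_top w⟩
    · have hxlt : x < (β k).toReal := by
        have h2 := hk.2
        rwa [← EReal.coe_toReal htop (hβbot k), EReal.coe_lt_coe_iff] at h2
      refine ⟨(β k).toReal, ?_, fun w hw => ?_⟩
      · by_contra hcon
        push_neg at hcon
        exact hxU (Set.mem_biUnion htop (Set.mem_Icc.mpr ⟨by linarith, hxlt.le⟩))
      · calc (w : EReal) < ((β k).toReal : EReal) := EReal.coe_lt_coe_iff.mpr hw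
          _ = β k := EReal.coe_toReal htop (hβbot k)
  -- set up radii
  set r₂ : ℝ := min (x - a) (b - (x + ε)) / 2 with hr₂def
  have hr₂a : r₂ ≤ (x - a) / 2 := by
    apply div_le_div_of_nonneg_right (min_le_left _ _) <;> norm_num
  have hr₂b : r₂ ≤ (b - (x + ε)) / 2 := by
    apply div_le_div_of_nonneg_right (min_le_right _ _) <;> norm_num
  have hr₂pos : 0 < r₂ := by
    apply div_pos (lt_min (by linarith) (by linarith)) (by norm_num)
  set r : ℝ := r₂ / 2 with hrdef
  have hrpos : 0 < r := by positivity
  have hrlt : r < r₂ := by rw [hrdef]; linarith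
  have hsubS : Set.Ioo (x - r₂) (x + ε + r₂) ⊆ {w : ℝ | α k < (w : EReal) ∧ (w : EReal) < β k} := by
    intro w hw
    exact ⟨hak w (by linarith [hw.1]), hbk w (by linarith [hw.2])⟩
  have hsubΩ : Set.Ioo (x - r₂) (x + ε + r₂) ⊆ Ω := fun w hw => by
    rw [hΩ]; exact Set.mem_iUnion.mpr ⟨k, hsubS hw⟩
  -- pick n
  obtain ⟨n, hn⟩ := exists_nat_ge (ε / ((r₂ - r) / 2))
  have hδpos : 0 < (r₂ - r) / 2 := by linarith
  have hnε : ε ≤ (n : ℝ) * ((r₂ - r) / 2) := by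
    rw [div_le_iff₀ hδpos] at hn
    linarith
  have hkey := key x r r₂ hrpos hrlt hsubΩ n ε hε.le le_rfl hnε f
  -- shifted support property of f
  have hf' := (ae_restrict_iff' hΩmeas).mp hf
  have hfshift := hshift ε _ hf'
  have hne : ∀ᵐ y : ℝ, y ≠ (α i).toReal - ε := by
    rw [ae_iff]
    have heq : {y : ℝ | ¬ y ≠ (α i).toReal - ε} = {(α i).toReal - ε} := by
      ext y; simp
    rw [heq]
    exact measure_singleton _
  have hαi : ((α i).toReal : EReal) = α i := EReal.coe_toReal (hαtop i) hi
  have hαβi : ∀ z : ℝ, z ≤ (α i).toReal + ε → (z : EReal) < β i := by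
    intro z hz
    rcases eq_or_ne (β i) ⊤ with htop | htop
    · rw [htop]; exact EReal.coe_lt_top z
    · have hβr : ((β i).toReal : EReal) = β i := EReal.coe_toReal htop (hβbot i)
      have hsubi : β i - α i = (((β i).toReal - (α i).toReal : ℝ) : EReal) := by
        rw [EReal.coe_sub, hβr, hαi]
      have hε2 := hεk i
      rw [hsubi, EReal.coe_lt_coe_iff] at hε2
      rw [← hβr, EReal.coe_lt_coe_iff]
      linarith
  -- local vanishing
  have h0 : ∀ᵐ y : ℝ, y ∈ Set.Ioo (x - r) (x + r) → (U ε f : ℝ → ℂ) y = 0 := by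
    filter_upwards [hkey, hfshift, hne] with y h1 h2 h3 hy
    have hy' : y ∈ Set.Ioo (x - r) (x + (ε - ε) + r) := ⟨hy.1, by linarith [hy.2]⟩
    have hyS : y + ε ∈ {w : ℝ | α k < (w : EReal) ∧ (w : EReal) < β k} :=
      hsubS ⟨by linarith [hy.1], by linarith [hy.2]⟩
    have hyΩ : y + ε ∈ Ω := by rw [hΩ]; exact Set.mem_iUnion.mpr ⟨k, hyS⟩
    have hyIcc : y + ε ∉ Set.Icc ((α i).toReal) ((α i).toReal + ε) := by
      intro hmem
      rcases eq_or_ne k i with rfl | hki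
      · have hka : (α k).toReal ≤ a := haR hi
        have hya : a < y := by linarith [hy.1, hax]
        exact absurd hmem.2 (by linarith)
      · have hzi : y + ε ∈ {w : ℝ | α i < (w : EReal) ∧ (w : EReal) < β i} := by
          constructor
          · have h1' : (α i).toReal ≤ y + ε := hmem.1
            have h1'' : (α i).toReal ≠ y + ε := fun hc => h3 (by linarith)
            rw [← hαi]
            exact EReal.coe_lt_coe_iff.mpr (lt_of_le_of_ne h1' h1'')
          · exact hαβi _ hmem.2
        exact Set.disjoint_left.mp (hdisj hki) hyS hzi
    rw [h1 hy']
    exact h2 hyΩ hyIcc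
  -- conclude
  refine ⟨{x' : ℝ | ¬(x' ∈ Ω → x' ∉ ⋃ k ∈ {k : I | β k ≠ ⊤},
      Set.Icc ((β k).toReal - ε) ((β k).toReal) → (U ε f : ℝ → ℂ) x' = 0)} ∩
      Set.Ioo (x - r) (x + r), ?_, ?_⟩
  · exact Filter.inter_mem self_mem_nhdsWithin
      (mem_nhdsWithin_of_mem_nhds (Ioo_mem_nhds (by linarith) (by linarith)))
  · apply measure_mono_null _ (ae_iff.mp h0)
    rintro y ⟨hy1, hy2⟩
    simp only [Set.mem_setOf_eq] at hy1 ⊢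
    push_neg at hy1
    intro hcon
    exact hy1.2.2 (hcon hy2)
end

section
/- Let 𝒯 be a countable subgroup of (ℝ^d, +) and suppose the measurable set Ω ⊆ ℝ^d tiles ℝ^d by 𝒯. Let γ : ℝ^d → 𝒯 be a measurable map such that x − γ(x) ∈ Ω for almost every x ∈ ℝ^d (such a map exists and is a.e. uniquely determined by the tiling). For t ∈ ℝ^d define, for f ∈ L²(Ω) and x ∈ Ω, (U(t)f)(x) = f(x + t − γ(x + t)). Then: each U(t) is a unitary operator on L²(Ω); U(t₁)U(t₂) = U(t₁ + t₂) for all t₁, t₂ ∈ ℝ^d and U(0) = I; the map t ↦ U(t)f is continuous for every f ∈ L²(Ω); and (U(t))_{t∈ℝ^d} is a group of local translations on Ω. -/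
/-!
`U(t)` is composition with `S_t x = x + t - γ(x + t)`. On `{γ(x + t) = τ}` the map `S_t` is
translation by `t - τ`, and the tiling identity `∑_τ 1_Ω(x - τ) = 1` reassembles the translated
pieces into `Ω`, so `S_t` preserves Lebesgue measure on `Ω`: each `U(t)` is a linear isometry.
The cocycle identity `γ(x + τ) = γ(x) + τ` (`τ ∈ 𝒯`) gives `S_{t₂} ∘ S_{t₁} = S_{t₁ + t₂}`, hence
the group law. Where `x + t ∈ Ω` we have `γ(x + t) = 0`, so `S_t` is the plain translation there;
this is locality, and it also shows that `U(t)g - a_t` is orthogonal to `a_t`, where `a_t` is the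
restriction to `Ω` of the translate by `t` of the zero extension of `g`. As `a_t → g` by continuity
of translation in `L²(ℝ^d)` and `‖U(t)g‖ = ‖g‖`, Pythagoras forces `U(t)g → g`.
-/

open MeasureTheory Filter Topology
open scoped ENNReal

theorem existsUnique_of_tsum_indicator_eq_one {ι α : Type*} {s : Set α} {v : ι → α}
    (h : ∑' i, s.indicator (fun _ => (1 : ℝ)) (v i) = 1) : ∃! i, v i ∈ s := by
  classical
  have hsum : Summable fun i => s.indicator (fun _ => (1 : ℝ)) (v i) := by
    by_contra hns
    rw [tsum_eq_zero_of_not_summable hns] at h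
    exact zero_ne_one h
  obtain ⟨i, hi⟩ : ∃ i, v i ∈ s := by
    by_contra! hnone
    simp [Set.indicator_of_notMem (hnone _)] at h
  refine ⟨i, hi, fun j hj => ?_⟩
  by_contra hji
  have := hsum.sum_le_tsum {i, j} fun k _ => Set.indicator_nonneg (fun _ _ => zero_le_one) _
  rw [Finset.sum_pair (Ne.symm hji), Set.indicator_of_mem hi, Set.indicator_of_mem hj, h] at this
  norm_num at this

theorem ae_comp_add_right {G : Type*} [MeasurableSpace G] [AddGroup G] [MeasurableAdd G]
    {μ : Measure G} [μ.IsAddRightInvariant] {p : G → Prop} (h : ∀ᵐ x ∂μ, p x) (t : G) :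
    ∀ᵐ x ∂μ, p (x + t) :=
  (measurePreserving_add_right μ t).quasiMeasurePreserving.ae h

theorem MeasureTheory.Lp.compMeasurePreserving_congr_ae {α β F : Type*} [MeasurableSpace α]
    [MeasurableSpace β] [NormedAddCommGroup F] {p : ℝ≥0∞} {μ : Measure α} {ν : Measure β}
    {f g : α → β} (hf : MeasurePreserving f μ ν) (hg : MeasurePreserving g μ ν) (hfg : f =ᵐ[μ] g)
    (x : Lp F p ν) : compMeasurePreserving f hf x = compMeasurePreserving g hg x := by
  apply Lp.ext
  filter_upwards [coeFn_compMeasurePreserving x hf, coeFn_compMeasurePreserving x hg, hfg]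
    with a hfa hga h
  rw [hfa, hga, Function.comp_apply, Function.comp_apply, h]

theorem tendsto_of_tendsto_of_inner_sub_eq_zero {ι 𝕜 H : Type*} [RCLike 𝕜] [NormedAddCommGroup H]
    [InnerProductSpace 𝕜 H] {l : Filter ι} {a u : ι → H} {x : H} (ha : Tendsto a l (𝓝 x))
    (hu : ∀ i, ‖u i‖ ≤ ‖x‖) (horth : ∀ i, inner 𝕜 (a i) (u i - a i) = 0) :
    Tendsto u l (𝓝 x) := by
  have hpyth : ∀ i, ‖u i - a i‖ ^ 2 ≤ ‖x‖ ^ 2 - ‖a i‖ ^ 2 := fun i => by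
    have := norm_add_sq_eq_norm_sq_add_norm_sq_of_inner_eq_zero _ _ (horth i)
    rw [add_sub_cancel] at this
    nlinarith [hu i, norm_nonneg (u i)]
  have hbound : Tendsto (fun i => ‖x‖ ^ 2 - ‖a i‖ ^ 2) l (𝓝 0) := by
    have := (tendsto_const_nhds (x := ‖x‖ ^ 2)).sub (ha.norm.pow 2)
    rwa [sub_self] at this
  have hdiff : Tendsto (fun i => u i - a i) l (𝓝 0) := by
    rw [tendsto_zero_iff_norm_tendsto_zero]
    simpa [Real.sqrt_sq (norm_nonneg _)] using
      (squeeze_zero (fun _ => by positivity) hpyth hbound).sqrt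
  simpa using ha.add hdiff

theorem continuous_apply_of_add_of_tendsto_zero {G X : Type*} [AddGroup G] [TopologicalSpace G]
    [IsTopologicalAddGroup G] [TopologicalSpace X] {U : G → X → X}
    (hadd : ∀ s t x, U (s + t) x = U s (U t x)) (h0 : ∀ x, Tendsto (fun t => U t x) (𝓝 0) (𝓝 x))
    (x : X) : Continuous fun t => U t x := by
  refine continuous_iff_continuousAt.2 fun s => ?_
  have hsub : Tendsto (fun t => t - s) (𝓝 s) (𝓝 0) := by
    simpa using (continuous_sub_right s).tendsto s
  refine ((h0 (U s x)).comp hsub).congr fun t => ?_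
  rw [Function.comp_apply, ← hadd, sub_add_cancel]

section Tiling

variable {E : Type*} [AddCommGroup E] [MeasurableSpace E]

structure IsTileIndex (μ : Measure E) (T : AddSubgroup E) (Ω : Set E) (γ : E → E) : Prop where
  mem : ∀ x, γ x ∈ T
  ae_sub_mem_iff : ∀ᵐ x ∂μ, ∀ τ ∈ T, x - τ ∈ Ω ↔ τ = γ x

def tileTranslate (γ : E → E) (t x : E) : E := x + t - γ (x + t)

theorem measurable_tileTranslate [MeasurableAdd₂ E] [MeasurableNeg E] {γ : E → E}
    (hγ : Measurable γ) (t : E) : Measurable (tileTranslate γ t) :=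
  (measurable_add_const t).sub (hγ.comp (measurable_add_const t))

namespace IsTileIndex

variable {μ : Measure E} {T : AddSubgroup E} {Ω : Set E} {γ : E → E}

theorem of_tsum_indicator_eq_one
    (htile : ∀ᵐ x ∂μ, ∑' τ : T, Ω.indicator (fun _ => (1 : ℝ)) (x - τ) = 1)
    (hγT : ∀ x, γ x ∈ T) (hγΩ : ∀ᵐ x ∂μ, x - γ x ∈ Ω) : IsTileIndex μ T Ω γ := by
  refine ⟨hγT, ?_⟩
  filter_upwards [htile, hγΩ] with x hx hxγ τ hτ
  obtain ⟨σ, -, hσ⟩ := existsUnique_of_tsum_indicator_eq_one hx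
  refine ⟨fun h => ?_, fun h => h ▸ hxγ⟩
  exact congrArg Subtype.val ((hσ ⟨τ, hτ⟩ h).trans (hσ ⟨γ x, hγT x⟩ hxγ).symm)

theorem ae_sub_mem (hγ : IsTileIndex μ T Ω γ) : ∀ᵐ x ∂μ, x - γ x ∈ Ω := by
  filter_upwards [hγ.ae_sub_mem_iff] with x hx using (hx _ (hγ.mem x)).2 rfl

theorem ae_eq_zero_of_mem (hγ : IsTileIndex μ T Ω γ) : ∀ᵐ x ∂μ, x ∈ Ω → γ x = 0 := by
  filter_upwards [hγ.ae_sub_mem_iff] with x hx hxΩ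
  exact ((hx 0 T.zero_mem).1 (by rwa [sub_zero])).symm

theorem ae_tsum_indicator_sub (hγ : IsTileIndex μ T Ω γ) :
    ∀ᵐ x ∂μ, ∀ F : E → E → ℝ≥0∞, ∑' τ : T, Ω.indicator (F τ) (x - τ) = F (γ x) (x - γ x) := by
  filter_upwards [hγ.ae_sub_mem_iff] with x hx F
  rw [tsum_eq_single ⟨γ x, hγ.mem x⟩ fun τ hτ => Set.indicator_of_notMem
    (fun h => hτ (Subtype.ext ((hx τ τ.2).1 h))) _]
  exact Set.indicator_of_mem ((hx _ (hγ.mem x)).2 rfl) _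

section Invariant

variable [MeasurableAdd E] [μ.IsAddRightInvariant]

theorem ae_add [Countable T] (hγ : IsTileIndex μ T Ω γ) :
    ∀ᵐ x ∂μ, ∀ τ ∈ T, γ (x + τ) = γ x + τ := by
  have hshift : ∀ᵐ x ∂μ, ∀ τ : T, ∀ σ ∈ T, x + τ - σ ∈ Ω ↔ σ = γ (x + τ) :=
    ae_all_iff.2 fun τ => ae_comp_add_right hγ.ae_sub_mem_iff τ
  filter_upwards [hshift, hγ.ae_sub_mem] with x hx hxΩ τ hτ
  refine ((hx ⟨τ, hτ⟩ _ (add_mem (hγ.mem x) hτ)).1 ?_).symm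
  rwa [add_sub_add_right_eq_sub]

theorem ae_tileTranslate_eq_add (hγ : IsTileIndex μ T Ω γ) (t : E) :
    ∀ᵐ x ∂μ, x + t ∈ Ω → tileTranslate γ t x = x + t := by
  filter_upwards [ae_comp_add_right hγ.ae_eq_zero_of_mem t] with x hx hxt
  rw [tileTranslate, hx hxt, sub_zero]

theorem ae_tileTranslate_tileTranslate [Countable T] (hγ : IsTileIndex μ T Ω γ) (t₁ t₂ : E) :
    ∀ᵐ x ∂μ, tileTranslate γ t₂ (tileTranslate γ t₁ x) = tileTranslate γ (t₁ + t₂) x := by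
  filter_upwards [ae_comp_add_right hγ.ae_add (t₁ + t₂)] with x hx
  have harg : x + t₁ - γ (x + t₁) + t₂ = x + (t₁ + t₂) + -γ (x + t₁) := by abel
  simp only [tileTranslate]
  rw [harg, hx _ (neg_mem (hγ.mem (x + t₁)))]
  abel

theorem ae_restrict_eq_add_of_eq_comp_tileTranslate {β : Type*} (hγ : IsTileIndex μ T Ω γ)
    {V : Set E} (hV : MeasurableSet V) (hVΩ : V ⊆ Ω) {t : E} (hVt : (· + t) '' V ⊆ Ω)
    {φ f : E → β} (hφ : φ =ᵐ[μ.restrict Ω] f ∘ tileTranslate γ t) :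
    ∀ᵐ x ∂μ.restrict V, φ x = f (x + t) := by
  filter_upwards [ae_restrict_of_ae_restrict_of_subset hVΩ hφ,
    ae_restrict_of_ae (hγ.ae_tileTranslate_eq_add t), ae_restrict_mem hV] with x hφx hS hx
  rw [hφx, Function.comp_apply, hS (hVt ⟨x, hx, rfl⟩)]

variable [MeasurableNeg E] [Countable T]

theorem lintegral_eq_tsum_setLIntegral (hγ : IsTileIndex μ T Ω γ) (hΩ : MeasurableSet Ω)
    {h : E → ℝ≥0∞} (hh : Measurable h) :
    ∫⁻ x, h x ∂μ = ∑' τ : T, ∫⁻ x in Ω, h (x + τ) ∂μ :=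
  calc ∫⁻ x, h x ∂μ = ∫⁻ x, ∑' τ : T, Ω.indicator (fun y => h (y + τ)) (x - τ) ∂μ := by
        refine lintegral_congr_ae (hγ.ae_tsum_indicator_sub.mono fun x hx => ?_)
        dsimp only
        rw [hx fun τ y => h (y + τ), sub_add_cancel]
    _ = ∑' τ : T, ∫⁻ x, Ω.indicator (fun y => h (y + τ)) (x - τ) ∂μ :=
        lintegral_tsum fun τ =>
          (((hh.comp (measurable_add_const _)).indicator hΩ).comp
            (measurable_sub_const _)).aemeasurable
    _ = ∑' τ : T, ∫⁻ x in Ω, h (x + τ) ∂μ := by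
        simp_rw [lintegral_sub_right_eq_self (Ω.indicator _), lintegral_indicator hΩ]

theorem lintegral_comp_tileTranslate (hγ : IsTileIndex μ T Ω γ) (hΩ : MeasurableSet Ω)
    {f : E → ℝ≥0∞} (hf : Measurable f) (t : E) :
    ∫⁻ x in Ω, f (tileTranslate γ t x) ∂μ = ∫⁻ x in Ω, f x ∂μ := by
  have hfΩ : Measurable (Ω.indicator f) := hf.indicator hΩ
  calc ∫⁻ x in Ω, f (tileTranslate γ t x) ∂μ
      = ∫⁻ x in Ω, ∑' τ : T, Ω.indicator f (x + t - τ) ∂μ := by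
        refine lintegral_congr_ae (ae_restrict_of_ae ?_)
        filter_upwards [ae_comp_add_right hγ.ae_tsum_indicator_sub t] with x hx
        exact (hx fun _ => f).symm
    _ = ∑' τ : T, ∫⁻ x in Ω, Ω.indicator f (x + t - τ) ∂μ :=
        lintegral_tsum fun τ => (hfΩ.comp ((measurable_add_const t).sub_const _)).aemeasurable
    _ = ∑' τ : T, ∫⁻ x in Ω, Ω.indicator f (x + -τ + t) ∂μ := by
        simp_rw [add_right_comm _ (-_ : E) t, ← sub_eq_add_neg]
    _ = ∫⁻ x, Ω.indicator f (x + t) ∂μ := by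
        rw [hγ.lintegral_eq_tsum_setLIntegral hΩ (h := fun x => Ω.indicator f (x + t))
          (hfΩ.comp (measurable_add_const t))]
        exact (Equiv.neg T).tsum_eq fun τ : T => ∫⁻ x in Ω, Ω.indicator f (x + τ + t) ∂μ
    _ = ∫⁻ x in Ω, f x ∂μ := by
        rw [lintegral_add_right_eq_self (Ω.indicator f) t, lintegral_indicator hΩ]

end Invariant

section MeasurePreserving

variable [MeasurableAdd₂ E] [MeasurableNeg E] [μ.IsAddRightInvariant] [Countable T]

theorem measurePreserving_tileTranslate (hγ : IsTileIndex μ T Ω γ) (hΩ : MeasurableSet Ω)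
    (hγm : Measurable γ) (t : E) :
    MeasurePreserving (tileTranslate γ t) (μ.restrict Ω) (μ.restrict Ω) := by
  have hS := measurable_tileTranslate hγm t
  refine ⟨hS, Measure.ext fun A hA => ?_⟩
  rw [Measure.map_apply hS hA, ← lintegral_indicator_one (hS hA), ← lintegral_indicator_one hA]
  exact hγ.lintegral_comp_tileTranslate hΩ (measurable_one.indicator hA) t

variable {F : Type*} [NormedAddCommGroup F] {p : ℝ≥0∞}

theorem compMeasurePreserving_tileTranslate_add (hγ : IsTileIndex μ T Ω γ)
    (hΩ : MeasurableSet Ω) (hγm : Measurable γ) (t₁ t₂ : E) (f : Lp F p (μ.restrict Ω)) :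
    Lp.compMeasurePreserving _ (hγ.measurePreserving_tileTranslate hΩ hγm (t₁ + t₂)) f =
      Lp.compMeasurePreserving _ (hγ.measurePreserving_tileTranslate hΩ hγm t₁)
        (Lp.compMeasurePreserving _ (hγ.measurePreserving_tileTranslate hΩ hγm t₂) f) := by
  have hcomp : tileTranslate γ t₂ ∘ tileTranslate γ t₁ =ᵐ[μ.restrict Ω] tileTranslate γ (t₁ + t₂) :=
    ae_restrict_of_ae (hγ.ae_tileTranslate_tileTranslate t₁ t₂)
  rw [← Lp.compMeasurePreserving_comp_apply]
  exact Lp.compMeasurePreserving_congr_ae _ _ hcomp.symm f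

theorem compMeasurePreserving_tileTranslate_zero (hγ : IsTileIndex μ T Ω γ)
    (hΩ : MeasurableSet Ω) (hγm : Measurable γ) (f : Lp F p (μ.restrict Ω)) :
    Lp.compMeasurePreserving _ (hγ.measurePreserving_tileTranslate hΩ hγm 0) f = f := by
  have hS0 : tileTranslate γ 0 =ᵐ[μ.restrict Ω] id := by
    filter_upwards [ae_restrict_of_ae (hγ.ae_tileTranslate_eq_add 0), ae_restrict_mem hΩ]
      with x hS hx
    simpa using hS (by simpa using hx)
  rw [Lp.compMeasurePreserving_congr_ae _ (.id _) hS0, Lp.compMeasurePreserving_id_apply]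

end MeasurePreserving

end IsTileIndex

end Tiling

section Continuity

variable {E : Type*} [AddCommGroup E] [TopologicalSpace E] [IsTopologicalAddGroup E]
  [SecondCountableTopology E] [MeasurableSpace E] [BorelSpace E] {μ : Measure E}
  [μ.IsAddLeftInvariant] [IsLocallyFiniteMeasure μ] [μ.InnerRegularCompactLTTop]
  {T : AddSubgroup E} [Countable T] {Ω : Set E} {γ : E → E}

theorem IsTileIndex.tendsto_compMeasurePreserving_tileTranslate (𝕜 : Type*) {F : Type*}
    [RCLike 𝕜] [NormedAddCommGroup F] [InnerProductSpace 𝕜 F] (hγ : IsTileIndex μ T Ω γ)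
    (hΩ : MeasurableSet Ω) (hγm : Measurable γ) (g : Lp F 2 (μ.restrict Ω)) :
    Tendsto (fun t => Lp.compMeasurePreserving (tileTranslate γ t)
      (hγ.measurePreserving_tileTranslate hΩ hγm t) g) (𝓝 0) (𝓝 g) := by
  have : Fact ((2 : ℝ≥0∞) ≠ ∞) := ⟨ENNReal.ofNat_ne_top⟩
  have hG := (memLp_indicator_iff_restrict hΩ).2 (Lp.memLp g)
  set G : Lp F 2 μ := hG.toLp (Ω.indicator g)
  set R := LpToLpRestrictCLM E F 𝕜 μ 2 Ω
  -- `a_t = R (mk t +ᵥ G)` is `x ↦ G (t + x)` restricted to `Ω`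
  refine tendsto_of_tendsto_of_inner_sub_eq_zero (𝕜 := 𝕜)
    (a := fun t : E => R (DomAddAct.mk t +ᵥ G))
    ?_ (fun t => (Lp.norm_compMeasurePreserving _ _).le) fun t => ?_
  · have hR0 : R (DomAddAct.mk (0 : E) +ᵥ G) = g := by
      rw [DomAddAct.mk_zero, zero_vadd]
      apply Lp.ext
      filter_upwards [LpToLpRestrictCLM_coeFn 𝕜 Ω G, ae_restrict_of_ae hG.coeFn_toLp,
        ae_restrict_mem hΩ] with x hRx hGx hx
      rw [hRx, hGx, Set.indicator_of_mem hx]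
    rw [← hR0]
    exact (R.continuous.comp (DomAddAct.continuous_mk.vadd continuous_const)).tendsto 0
  · rw [L2.inner_def]
    refine integral_eq_zero_of_ae ?_
    filter_upwards [LpToLpRestrictCLM_coeFn 𝕜 Ω (DomAddAct.mk t +ᵥ G),
      ae_restrict_of_ae (DomAddAct.vadd_Lp_ae_eq (DomAddAct.mk t) G),
      ae_restrict_of_ae (ae_comp_add_right hG.coeFn_toLp t),
      Lp.coeFn_sub (Lp.compMeasurePreserving (tileTranslate γ t)
        (hγ.measurePreserving_tileTranslate hΩ hγm t) g) (R (DomAddAct.mk t +ᵥ G)),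
      Lp.coeFn_compMeasurePreserving g (hγ.measurePreserving_tileTranslate hΩ hγm t),
      ae_restrict_of_ae (hγ.ae_tileTranslate_eq_add t)] with x hRx hvadd hGx hsub hU hS
    have ha : R (DomAddAct.mk t +ᵥ G) x = Ω.indicator g (x + t) := by
      rw [hRx, hvadd, Equiv.symm_apply_apply, vadd_eq_add, add_comm, hGx]
    rw [Pi.zero_apply, hsub, Pi.sub_apply, ha, hU, Function.comp_apply]
    by_cases hxt : x + t ∈ Ω
    · rw [Set.indicator_of_mem hxt, hS hxt, sub_self, inner_zero_right]
    · rw [Set.indicator_of_notMem hxt, inner_zero_left]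

end Continuity

/-- If `Ω` tiles `ℝ^d` by a countable subgroup `𝒯`, `γ(x) ∈ 𝒯` is the a.e.
unique group element with `x - γ(x) ∈ Ω`, and `(U(t)f)(x) = f(x + t - γ(x + t))`, then
`(U(t))` is a strongly continuous unitary group of local translations on `L²(Ω)`. -/
theorem statement14 (d : ℕ) (T : AddSubgroup (Fin d → ℝ))
    (hTc : (T : Set (Fin d → ℝ)).Countable)
    (Ω : Set (Fin d → ℝ)) (hΩ : MeasurableSet Ω)
    (htile : ∀ᵐ x ∂(volume : Measure (Fin d → ℝ)),
      ∑' τ : T, Set.indicator Ω (fun _ => (1 : ℝ)) (x - (τ : Fin d → ℝ)) = 1)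
    (γ : (Fin d → ℝ) → (Fin d → ℝ)) (hγmeas : Measurable γ)
    (hγT : ∀ x, γ x ∈ T)
    (hγΩ : ∀ᵐ x ∂(volume : Measure (Fin d → ℝ)), x - γ x ∈ Ω)
    (U : (Fin d → ℝ) → Lp ℂ 2 (volume.restrict Ω) → Lp ℂ 2 (volume.restrict Ω))
    (hU : ∀ t f, (U t f : (Fin d → ℝ) → ℂ) =ᵐ[volume.restrict Ω]
      fun x => (f : (Fin d → ℝ) → ℂ) (x + t - γ (x + t))) :
    (∀ t, IsLinearMap ℂ (U t)) ∧
    (∀ t f, ‖U t f‖ = ‖f‖) ∧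
    (∀ t, Function.Bijective (U t)) ∧
    (∀ t₁ t₂ f, U (t₁ + t₂) f = U t₁ (U t₂ f)) ∧
    (U 0 = id) ∧
    (∀ f, Continuous fun t => U t f) ∧
    (∀ V : Set (Fin d → ℝ), IsOpen V → V ⊆ Ω →
      ∀ t : Fin d → ℝ, (fun x => x + t) '' V ⊆ Ω →
      ∀ f, ∀ᵐ x ∂(volume.restrict V),
        (U t f : (Fin d → ℝ) → ℂ) x = (f : (Fin d → ℝ) → ℂ) (x + t)) := by
  have : Countable T := hTc.to_subtype
  have hγ : IsTileIndex volume T Ω γ := .of_tsum_indicator_eq_one htile hγT hγΩ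
  have hmp := hγ.measurePreserving_tileTranslate hΩ hγmeas
  have hUeq : U = fun t f => Lp.compMeasurePreserving (tileTranslate γ t) (hmp t) f :=
    funext₂ fun t f => Lp.ext ((hU t f).trans (Lp.coeFn_compMeasurePreserving f (hmp t)).symm)
  have hadd : ∀ t₁ t₂ f, U (t₁ + t₂) f = U t₁ (U t₂ f) := by
    subst hUeq
    exact hγ.compMeasurePreserving_tileTranslate_add hΩ hγmeas
  have hzero : U 0 = id := by
    subst hUeq
    exact funext (hγ.compMeasurePreserving_tileTranslate_zero hΩ hγmeas)
  refine ⟨fun t => ?_, fun t f => ?_, fun t => ?_, hadd, hzero,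
    continuous_apply_of_add_of_tendsto_zero hadd fun f => ?_, fun V hV hVΩ t hVt f =>
      hγ.ae_restrict_eq_add_of_eq_comp_tileTranslate hV.measurableSet hVΩ hVt (hU t f)⟩
  · rw [hUeq]
    exact (Lp.compMeasurePreservingₗ ℂ _ (hmp t)).isLinear
  · rw [hUeq]
    exact Lp.norm_compMeasurePreserving f (hmp t)
  · refine Function.bijective_iff_has_inverse.2 ⟨U (-t), fun f => ?_, fun f => ?_⟩
    · rw [← hadd, neg_add_cancel, hzero, id]
    · rw [← hadd, add_neg_cancel, hzero, id]
  · rw [hUeq]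
    exact hγ.tendsto_compMeasurePreserving_tileTranslate ℂ hΩ hγmeas f
end

section
/- Let 𝒯 be a countable subgroup of (ℝ^d, +), let the measurable set Ω ⊆ ℝ^d tile ℝ^d by 𝒯, let γ : ℝ^d → 𝒯 be measurable with x − γ(x) ∈ Ω for almost every x, and define (U(t)f)(x) = f(x + t − γ(x + t)) for f ∈ L²(Ω), x ∈ Ω, t ∈ ℝ^d. Then for every f ∈ L¹(Ω)∩L²(Ω), every t ∈ ℝ^d and every γ* in the dual set 𝒯* = {γ* ∈ ℝ^d : γ*·γ ∈ ℤ for all γ ∈ 𝒯}, one has ∫_Ω (U(t)f)(x) e^{−2πi γ*·x} dx = e^{2πi γ*·t} ∫_Ω f(x) e^{−2πi γ*·x} dx. -/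
open MeasureTheory
open scoped Pointwise

/-!
Tiling makes `γ` almost everywhere equivariant, `γ (τ + x) = τ + γ x` for `τ ∈ 𝒯`, so
`y ↦ f (y - γ y) e^{-2πi γ*·y}` is `𝒯`-periodic. Writing `e^{-2πi γ*·x}` as
`e^{2πi γ*·t} e^{-2πi γ*·(x + t)}` and substituting `y = x + t`, the left side becomes
`e^{2πi γ*·t}` times the integral of this periodic function over `Ω + t`. That is another
fundamental domain of `𝒯`, so the integral may be taken over `Ω` instead, where `y - γ y = y`
almost everywhere.
-/

theorem existsUnique_mem_of_tsum_indicator_eq_one {ι : Type*} {s : Set ι}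
    (h : ∑' i, s.indicator (fun _ => (1 : ℝ)) i = 1) : ∃! i, i ∈ s := by
  rw [← tsum_subtype, tsum_const, nsmul_eq_mul, mul_one, Nat.cast_eq_one,
    Nat.card_eq_one_iff_exists] at h
  obtain ⟨⟨i, hi⟩, huniq⟩ := h
  exact ⟨i, hi, fun j hj => congrArg Subtype.val (huniq ⟨j, hj⟩)⟩

namespace MeasureTheory.IsAddFundamentalDomain

variable {G α : Type*} [AddGroup G] [AddAction G α] [MeasurableSpace α] {s : Set α}
  {μ : Measure α}

theorem mk_of_ae_existsUnique (h_meas : NullMeasurableSet s μ)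
    (h_exists : ∀ᵐ x ∂μ, ∃! g : G, g +ᵥ x ∈ s) : IsAddFundamentalDomain G s μ where
  nullMeasurableSet := h_meas
  ae_covers := h_exists.mono fun _ hx => hx.exists
  aedisjoint a b hab := by
    refine measure_mono_null (fun x hx => ?_) (ae_iff.1 h_exists)
    obtain ⟨hxa, hxb⟩ := hx
    rw [Set.mem_vadd_set_iff_neg_vadd_mem] at hxa hxb
    exact fun hx_unique => hab (neg_injective (hx_unique.unique hxa hxb))

variable {E : Type*} [NormedAddCommGroup E] [NormedSpace ℝ E] [Countable G] [MeasurableSpace G]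
  [MeasurableVAdd G α] [VAddInvariantMeasure G α μ]

theorem setIntegral_eq_of_ae_invariant {t : Set α} (hs : IsAddFundamentalDomain G s μ)
    (ht : IsAddFundamentalDomain G t μ) {f : α → E}
    (hf : ∀ g : G, ∀ᵐ x ∂μ, f (g +ᵥ x) = f x) :
    ∫ x in s, f x ∂μ = ∫ x in t, f x ∂μ := by
  -- On the conull, `G`-invariant set `S` the function `f` is invariant on the nose.
  set S := {x | ∀ g : G, f (g +ᵥ x) = f x}
  have hS : ∀ᵐ x ∂μ, x ∈ S := ae_all_iff.2 hf
  have hf_ae : f =ᵐ[μ] S.indicator f := hS.mono fun x hx => (Set.indicator_of_mem hx f).symm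
  have hS_inv : ∀ (g : G) x, g +ᵥ x ∈ S ↔ x ∈ S := fun g x =>
    ⟨fun h g' => by
      have h₁ := h (g' + -g)
      have h₂ := h (-g)
      rw [← add_vadd, neg_add_cancel_right] at h₁
      rw [← add_vadd, neg_add_cancel, zero_vadd] at h₂
      rw [h₁, h₂], fun h g' => by rw [← add_vadd, h, h]⟩
  rw [integral_congr_ae (ae_restrict_of_ae hf_ae), integral_congr_ae (ae_restrict_of_ae hf_ae)]
  refine hs.setIntegral_eq ht fun g x => ?_
  by_cases hx : x ∈ S
  · rw [Set.indicator_of_mem hx, Set.indicator_of_mem ((hS_inv g x).2 hx), hx g]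
  · rw [Set.indicator_of_notMem hx, Set.indicator_of_notMem (mt (hS_inv g x).1 hx)]

end MeasureTheory.IsAddFundamentalDomain

section Tiling

variable {G : Type*} [AddCommGroup G] [MeasurableSpace G] {μ : Measure G}
  {T : AddSubgroup G} {Ω : Set G}

theorem isAddFundamentalDomain_of_ae_existsUnique_sub_mem (hΩ : NullMeasurableSet Ω μ)
    (htile : ∀ᵐ x ∂μ, ∃! τ : T, x - (τ : G) ∈ Ω) : IsAddFundamentalDomain T Ω μ :=
  .mk_of_ae_existsUnique hΩ <| htile.mono fun x ⟨τ, hτ, huniq⟩ =>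
    ⟨-τ, show ((-τ : T) : G) + x ∈ Ω by rwa [AddSubgroup.coe_neg, neg_add_eq_sub],
      fun g hg => neg_eq_iff_eq_neg.1 <| huniq (-g) <| show x - ((-g : T) : G) ∈ Ω by
        rw [AddSubgroup.coe_neg, sub_neg_eq_add, add_comm]; exact hg⟩

theorem MeasureTheory.IsAddFundamentalDomain.setIntegral_comp_add_right
    {E : Type*} [NormedAddCommGroup E] [NormedSpace ℝ E] [MeasurableAdd G]
    [μ.IsAddLeftInvariant] [Countable T]
    (hΩ : IsAddFundamentalDomain T Ω μ) {H : G → E}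
    (hH : ∀ τ : T, ∀ᵐ x ∂μ, H (τ + x) = H x) (t : G) :
    ∫ x in Ω, H (x + t) ∂μ = ∫ x in Ω, H x ∂μ := by
  calc ∫ x in Ω, H (x + t) ∂μ = ∫ x in t +ᵥ Ω, H x ∂μ := by
        rw [← Set.image_vadd, (measurePreserving_vadd t μ).setIntegral_image_emb
          (measurableEmbedding_const_vadd t)]
        simp only [vadd_eq_add, add_comm]
    _ = ∫ x in Ω, H x ∂μ := (hΩ.vadd_of_comm t).setIntegral_eq_of_ae_invariant hΩ hH

variable {γ : G → G} (htile : ∀ᵐ x ∂μ, ∃! τ : T, x - (τ : G) ∈ Ω)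
  (hγT : ∀ x, γ x ∈ T) (hγΩ : ∀ᵐ x ∂μ, x - γ x ∈ Ω)
include htile hγT hγΩ

theorem ae_sub_eq_self_of_mem_of_tiling : ∀ᵐ x ∂μ, x ∈ Ω → x - γ x = x := by
  filter_upwards [htile, hγΩ] with x hx hxγ hxΩ
  have : (⟨γ x, hγT x⟩ : T) = 0 := hx.unique hxγ (by simpa using hxΩ)
  simpa using congrArg Subtype.val this

theorem ae_sub_add_left_eq_of_tiling [MeasurableAdd G] [μ.IsAddLeftInvariant] (τ : T) :
    ∀ᵐ x ∂μ, τ + x - γ (τ + x) = x - γ x := by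
  have hγΩ' : ∀ᵐ x ∂μ, τ + x - γ (τ + x) ∈ Ω :=
    (measurePreserving_add_left μ τ).quasiMeasurePreserving.ae hγΩ
  filter_upwards [htile, hγΩ, hγΩ'] with x hx hxγ hxγ'
  have hγ_add : γ (τ + x) - τ = γ x := congrArg Subtype.val <|
    hx.unique (y₁ := ⟨γ (τ + x) - τ, sub_mem (hγT _) τ.2⟩) (y₂ := ⟨γ x, hγT x⟩)
      (show x - (γ (τ + x) - τ) ∈ Ω by rwa [sub_sub_eq_add_sub, add_comm]) hxγ
  rw [← hγ_add]
  abel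

end Tiling

section DualCharacter

variable {d : ℕ}

noncomputable def dualChar (γs x : Fin d → ℝ) : ℂ :=
  Complex.exp ((((-2) * Real.pi * (∑ i, γs i * x i) : ℝ) : ℂ) * Complex.I)

theorem dualChar_add (γs x y : Fin d → ℝ) :
    dualChar γs (x + y) = dualChar γs x * dualChar γs y := by
  simp only [dualChar, Pi.add_apply, mul_add, Finset.sum_add_distrib, ← Complex.exp_add]
  push_cast
  ring_nf

theorem dualChar_eq_one_of_sum_eq_int {γs g : Fin d → ℝ} {n : ℤ}
    (h : ∑ i, γs i * g i = n) : dualChar γs g = 1 := by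
  rw [dualChar, h, ← Complex.exp_int_mul_two_pi_mul_I (-n)]
  push_cast
  ring_nf

theorem exp_mul_dualChar_self (γs t : Fin d → ℝ) :
    Complex.exp (((2 * Real.pi * (∑ i, γs i * t i) : ℝ) : ℂ) * Complex.I) * dualChar γs t =
      1 := by
  rw [dualChar, ← Complex.exp_add, ← Complex.exp_zero]
  push_cast
  ring_nf

end DualCharacter

theorem statement15_general (d : ℕ) (T : AddSubgroup (Fin d → ℝ))
    (hTc : (T : Set (Fin d → ℝ)).Countable)
    (Ω : Set (Fin d → ℝ)) (hΩ : MeasurableSet Ω)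
    (htile : ∀ᵐ x ∂(volume : Measure (Fin d → ℝ)),
      ∑' τ : T, Set.indicator Ω (fun _ => (1 : ℝ)) (x - (τ : Fin d → ℝ)) = 1)
    (γ : (Fin d → ℝ) → (Fin d → ℝ))
    (hγT : ∀ x, γ x ∈ T)
    (hγΩ : ∀ᵐ x ∂(volume : Measure (Fin d → ℝ)), x - γ x ∈ Ω)
    (f : (Fin d → ℝ) → ℂ)
    (t : Fin d → ℝ) (γs : Fin d → ℝ)
    (hγs : ∀ g ∈ T, ∃ n : ℤ, (∑ i, γs i * g i) = (n : ℝ)) :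
    ∫ x in Ω, f (x + t - γ (x + t)) *
        Complex.exp ((((-2) * Real.pi * (∑ i, γs i * x i) : ℝ) : ℂ) * Complex.I)
      = Complex.exp (((2 * Real.pi * (∑ i, γs i * t i) : ℝ) : ℂ) * Complex.I) *
        ∫ x in Ω, f x *
          Complex.exp ((((-2) * Real.pi * (∑ i, γs i * x i) : ℝ) : ℂ) * Complex.I) := by
  have : Countable T := hTc.to_subtype
  have htile' : ∀ᵐ x ∂volume, ∃! τ : T, x - (τ : Fin d → ℝ) ∈ Ω :=
    htile.mono fun x hx =>
      existsUnique_mem_of_tsum_indicator_eq_one (s := {τ : T | x - τ ∈ Ω}) hx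
  have hΩ_fd := isAddFundamentalDomain_of_ae_existsUnique_sub_mem hΩ.nullMeasurableSet htile'
  have hperiodic : ∀ τ : T, ∀ᵐ x ∂volume,
      f (τ + x - γ (τ + x)) * dualChar γs (τ + x) = f (x - γ x) * dualChar γs x := fun τ =>
    (ae_sub_add_left_eq_of_tiling htile' hγT hγΩ τ).mono fun x hx => by
      obtain ⟨n, hn⟩ := hγs τ τ.2
      rw [hx, dualChar_add, dualChar_eq_one_of_sum_eq_int hn, one_mul]
  set c := Complex.exp (((2 * Real.pi * (∑ i, γs i * t i) : ℝ) : ℂ) * Complex.I)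
  change ∫ x in Ω, f (x + t - γ (x + t)) * dualChar γs x =
    c * ∫ x in Ω, f x * dualChar γs x
  calc ∫ x in Ω, f (x + t - γ (x + t)) * dualChar γs x
      = c * ∫ x in Ω, f (x + t - γ (x + t)) * dualChar γs (x + t) := by
        rw [← integral_const_mul]
        congr with x
        rw [dualChar_add]
        linear_combination -(f (x + t - γ (x + t)) * dualChar γs x) * exp_mul_dualChar_self γs t
    _ = c * ∫ x in Ω, f (x - γ x) * dualChar γs x := by
        rw [hΩ_fd.setIntegral_comp_add_right
          (H := fun y => f (y - γ y) * dualChar γs y) hperiodic]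
    _ = c * ∫ x in Ω, f x * dualChar γs x := by
        rw [setIntegral_congr_ae hΩ <| (ae_sub_eq_self_of_mem_of_tiling htile' hγT hγΩ).mono
          fun x hx hxΩ => by rw [hx hxΩ]]

/-- With `Ω` tiling `ℝ^d` by the countable subgroup `𝒯`, `γ` as in the tiling,
and `(U(t)f)(x) = f(x + t - γ(x + t))`, for every `f ∈ L¹(Ω) ∩ L²(Ω)`, `t ∈ ℝ^d` and every
`γ*` in the dual set `𝒯*`, the Fourier transform of `U(t)f` at `γ*` equals
`e^{2πi γ*·t}` times the Fourier transform of `f` at `γ*`. -/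
theorem statement15 (d : ℕ) (T : AddSubgroup (Fin d → ℝ))
    (hTc : (T : Set (Fin d → ℝ)).Countable)
    (Ω : Set (Fin d → ℝ)) (hΩ : MeasurableSet Ω)
    (htile : ∀ᵐ x ∂(volume : Measure (Fin d → ℝ)),
      ∑' τ : T, Set.indicator Ω (fun _ => (1 : ℝ)) (x - (τ : Fin d → ℝ)) = 1)
    (γ : (Fin d → ℝ) → (Fin d → ℝ)) (hγmeas : Measurable γ)
    (hγT : ∀ x, γ x ∈ T)
    (hγΩ : ∀ᵐ x ∂(volume : Measure (Fin d → ℝ)), x - γ x ∈ Ω)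
    (f : (Fin d → ℝ) → ℂ)
    (hf1 : Integrable f (volume.restrict Ω))
    (hf2 : MemLp f 2 (volume.restrict Ω))
    (t : Fin d → ℝ) (γs : Fin d → ℝ)
    (hγs : ∀ g ∈ T, ∃ n : ℤ, (∑ i, γs i * g i) = (n : ℝ)) :
    ∫ x in Ω, f (x + t - γ (x + t)) *
        Complex.exp ((((-2) * Real.pi * (∑ i, γs i * x i) : ℝ) : ℂ) * Complex.I)
      = Complex.exp (((2 * Real.pi * (∑ i, γs i * t i) : ℝ) : ℂ) * Complex.I) *
        ∫ x in Ω, f x *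
          Complex.exp ((((-2) * Real.pi * (∑ i, γs i * x i) : ℝ) : ℂ) * Complex.I) :=
  statement15_general d T hTc Ω hΩ htile γ hγT hγΩ f t γs hγs
end
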